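/- arXiv:2603.15830 — 8 statements merged into one kernel-verified Lean document; each statement's English description precedes it below -/
import Mathlib

section
/- For integers 0 ≤ k ≤ n with n ≥ 1, the number of binary necklaces of length n with exactly k ones equals (1/n) · Σ_{d | gcd(n,k)} φ(d) · C(n/d, k/d), where the sum is over positive divisors d of gcd(n,k) and φ is Euler's totient function. -/
open Finset

/-- Number of ones in a cyclic binary word of length `n`. -/
noncomputable def onesCount (n : ℕ) (w : ZMod n → Bool) : ℕ :=
  Nat.card {i : ZMod n // w i = true}

/-- The co-period of a cyclic binary word `w` of length `n`: the size of its
stabilizer under cyclic rotation (equivalently, the `j` such that `w = v^j`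
with `v` primitive). -/
noncomputable def coPeriod (n : ℕ) (w : ZMod n → Bool) : ℕ :=
  Nat.card {t : ZMod n // ∀ i, w (i + t) = w i}

/-- Two cyclic words are related iff they are cyclic rotations of each other. -/
def rotRel (n : ℕ) (u v : ZMod n → Bool) : Prop :=
  ∃ t : ZMod n, ∀ i, u i = v (i + t)

theorem rotRel_equivalence (n : ℕ) : Equivalence (rotRel n) := by
  constructor
  · exact fun u => ⟨0, fun i => by rw [add_zero]⟩
  · rintro u v ⟨t, h⟩
    exact ⟨-t, fun i => by rw [h, neg_add_cancel_right]⟩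
  · rintro u v w ⟨t1, h1⟩ ⟨t2, h2⟩
    exact ⟨t1 + t2, fun i => by rw [h1, h2, ← add_assoc]⟩

def rotSetoid (n : ℕ) : Setoid (ZMod n → Bool) := ⟨rotRel n, rotRel_equivalence n⟩

/-- The number of binary necklaces of length `n` with `k` ones. -/
noncomputable def NCard (n k : ℕ) : ℕ :=
  Nat.card (Quotient (Setoid.comap
    (Subtype.val : {w : ZMod n → Bool // onesCount n w = k} → _) (rotSetoid n)))

/-- The number of binary necklaces of length `n` with `k` ones whose co-period divides `r`. -/
noncomputable def NrCard (n k r : ℕ) : ℕ :=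
  Nat.card (Quotient (Setoid.comap
    (Subtype.val : {w : ZMod n → Bool // onesCount n w = k ∧ coPeriod n w ∣ r} → _)
    (rotSetoid n)))

/-- The number of `k`-element subsets of `{1,…,n}` whose elements sum to `r` mod `n`. -/
def SbarCard (n k r : ℕ) : ℕ :=
  ((Finset.Icc 1 n).powerset.filter
    (fun A => A.card = k ∧ (∑ a ∈ A, a) % n = r)).card

/-- The number of `k`-element subsets of `{1,…,n-1}` whose elements sum to `r` mod `n`. -/
def SCard (n k r : ℕ) : ℕ :=
  ((Finset.Icc 1 (n - 1)).powerset.filter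
    (fun A => A.card = k ∧ (∑ a ∈ A, a) % n = r)).card

/-- The Ramanujan sum `c_d(r) = ∑_{j ∣ gcd(r,d)} j · μ(d/j)`. -/
def ramanujanSum (d : ℕ) (r : ℤ) : ℤ :=
  ∑ j ∈ (Int.gcd r d).divisors, (j : ℤ) * ArithmeticFunction.moebius (d / j)

/-!
Burnside's lemma for the rotation action of `ZMod n` on words with `k` ones: `n` times the number
of orbits is the total number of fixed points. A word fixed by a rotation `t` of order `d` is
constant on the `n / d` cosets of `⟨t⟩`, each of size `d`, so it is a word on the cosets with
`k / d` ones: there are `C(n/d, k/d)` of them if `d ∣ k`, and none otherwise. As `ZMod n` is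
cyclic, exactly `φ d` rotations have order `d`, for each `d ∣ n`.
-/

abbrev OnesWords (α : Type*) (k : ℕ) : Type _ := {w : α → Bool // Nat.card {a // w a = true} = k}

theorem card_onesWords (α : Type*) [Finite α] (k : ℕ) :
    Nat.card (OnesWords α k) = (Nat.card α).choose k := by
  classical
  have := Fintype.ofFinite α
  let e : OnesWords α k ≃ {s : Finset α // s.card = k} :=
    { toFun w := ⟨Finset.univ.filter (w.1 · = true), by
        rw [← Fintype.card_subtype, ← Nat.card_eq_fintype_card, w.2]⟩
      invFun s := ⟨fun a => decide (a ∈ s.1), by simp [Nat.card_eq_fintype_card, s.2]⟩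
      left_inv w := by ext a; simp
      right_inv s := by ext a; simp }
  rw [Nat.card_congr e, Nat.card_eq_fintype_card, Fintype.card_finset_len, Nat.card_eq_fintype_card]

theorem card_words_mul_card_ones_eq (α : Type*) [Finite α] {m : ℕ} (hm : m ≠ 0) (k : ℕ) :
    Nat.card {w : α → Bool // m * Nat.card {a // w a = true} = k}
      = if m ∣ k then (Nat.card α).choose (k / m) else 0 := by
  split_ifs with hmk
  · rw [← card_onesWords]
    refine Nat.card_congr (Equiv.subtypeEquivRight fun w => ?_)
    rw [Nat.eq_div_iff_mul_eq_left hm hmk, mul_comm, eq_comm]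
  · have : IsEmpty {w : α → Bool // m * Nat.card {a // w a = true} = k} :=
      ⟨fun w => hmk ⟨_, w.2.symm⟩⟩
    exact Nat.card_of_isEmpty

theorem sum_card_fixedBy_eq_card_orbits_mul_card (G X : Type*) [AddGroup G] [Fintype G]
    [AddAction G X] [Finite X] :
    ∑ t : G, Nat.card (AddAction.fixedBy X t) =
      Nat.card (Quotient (AddAction.orbitRel G X)) * Nat.card G := by
  rw [← Nat.card_sigma, Nat.card_congr (AddAction.sigmaFixedByEquivOrbitsProdAddGroup G X),
    Nat.card_prod]

theorem IsAddCyclic.sum_comp_addOrderOf {G M : Type*} [AddGroup G] [IsAddCyclic G] [Fintype G]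
    [AddCommMonoid M] (f : ℕ → M) :
    ∑ t : G, f (addOrderOf t) = ∑ d ∈ (Fintype.card G).divisors, d.totient • f d := by
  classical
  rw [← Finset.sum_fiberwise_of_maps_to (g := addOrderOf) (t := (Fintype.card G).divisors)
    fun t _ => Nat.mem_divisors.mpr ⟨addOrderOf_dvd_card, Fintype.card_ne_zero⟩]
  refine Finset.sum_congr rfl fun d hd => ?_
  rw [Finset.sum_congr rfl fun t ht => by rw [(Finset.mem_filter.mp ht).2], Finset.sum_const,
    IsAddCyclic.card_addOrderOf_eq_totient (Nat.dvd_of_mem_divisors hd)]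

theorem Nat.filter_dvd_divisors_eq_divisors_gcd {n : ℕ} (hn : n ≠ 0) (k : ℕ) :
    {d ∈ n.divisors | d ∣ k} = (n.gcd k).divisors := by
  rw [← Nat.divisors_filter_dvd_of_dvd hn (Nat.gcd_dvd_left n k)]
  refine Finset.filter_congr fun d hd => ?_
  rw [Nat.dvd_gcd_iff, and_iff_right (Nat.dvd_of_mem_divisors hd)]

theorem card_ones_comp_mk {G : Type*} [AddGroup G] (H : AddSubgroup G) (v : G ⧸ H → Bool) :
    Nat.card {i : G // v i = true} = Nat.card H * Nat.card {c // v c = true} := by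
  rw [← Nat.card_prod]
  exact Nat.card_congr (QuotientAddGroup.preimageMkEquivAddSubgroupProdSet H {c | v c = true})

section Rotation

variable {G : Type*} [AddCommGroup G] {k : ℕ}

instance : AddAction G (OnesWords G k) where
  vadd t w := ⟨fun i => w.1 (i + t),
    (Nat.card_congr (Equiv.subtypeEquiv (Equiv.addRight t) fun _ => Iff.rfl)).trans w.2⟩
  zero_vadd w := Subtype.ext <| funext fun i => congrArg w.1 (add_zero i)
  add_vadd t s w := Subtype.ext <| funext fun i => congrArg w.1 (add_assoc i t s).symm

theorem OnesWords.vadd_apply (t : G) (w : OnesWords G k) (i : G) : (t +ᵥ w).1 i = w.1 (i + t) := rfl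

theorem OnesWords.mem_fixedBy_iff_le_ker {t : G} {w : OnesWords G k} :
    w ∈ AddAction.fixedBy (OnesWords G k) t ↔
      QuotientAddGroup.leftRel (AddSubgroup.zmultiples t) ≤ Setoid.ker w.1 := by
  rw [← AddAction.mem_fixedBy_zmultiples_iff_mem_fixedBy]
  simp only [AddAction.mem_fixedBy, Subtype.ext_iff, funext_iff, OnesWords.vadd_apply]
  constructor
  · intro h a b hab
    obtain ⟨j, hj⟩ := AddSubgroup.mem_zmultiples_iff.mp (QuotientAddGroup.leftRel_apply.mp hab)
    rw [Setoid.ker_def, ← h j a, hj, add_neg_cancel_left]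
  · intro h j i
    refine (h (QuotientAddGroup.leftRel_apply.mpr ?_)).symm
    rw [neg_add_cancel_left]
    exact AddSubgroup.zsmul_mem_zmultiples t j

def OnesWords.fixedByEquiv (t : G) :
    AddAction.fixedBy (OnesWords G k) t ≃
      {v : G ⧸ AddSubgroup.zmultiples t → Bool // Nat.card {i : G // v i = true} = k} where
  toFun w := ⟨Setoid.liftEquiv _ ⟨w.1.1, OnesWords.mem_fixedBy_iff_le_ker.mp w.2⟩, w.1.2⟩
  invFun v := ⟨⟨v.1 ∘ (↑), v.2⟩,
    OnesWords.mem_fixedBy_iff_le_ker.mpr ((Setoid.liftEquiv _).symm v.1).2⟩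
  left_inv _ := rfl
  right_inv v := Subtype.ext <| (Setoid.liftEquiv _).apply_symm_apply v.1

theorem OnesWords.card_fixedBy [Finite G] (t : G) :
    Nat.card (AddAction.fixedBy (OnesWords G k) t) =
      if addOrderOf t ∣ k then (Nat.card G / addOrderOf t).choose (k / addOrderOf t) else 0 := by
  have hpos : 0 < addOrderOf t := addOrderOf_pos t
  have hquot : Nat.card (G ⧸ AddSubgroup.zmultiples t) = Nat.card G / addOrderOf t := by
    rw [← (AddSubgroup.zmultiples t).index_mul_card, Nat.card_zmultiples, Nat.mul_div_cancel _ hpos]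
    rfl
  rw [Nat.card_congr (OnesWords.fixedByEquiv t), ← hquot, ← card_words_mul_card_ones_eq _ hpos.ne']
  refine Nat.card_congr (Equiv.subtypeEquivRight fun v => ?_)
  rw [card_ones_comp_mk, Nat.card_zmultiples]

end Rotation

theorem nCard_eq_card_orbits (n k : ℕ) :
    NCard n k = Nat.card (Quotient (AddAction.orbitRel (ZMod n) (OnesWords (ZMod n) k))) := by
  show Nat.card (Quotient (Setoid.comap (Subtype.val : OnesWords (ZMod n) k → _) (rotSetoid n))) = _
  congr 2
  ext u v
  exact ⟨fun ⟨t, h⟩ => ⟨t, Subtype.ext (funext fun i => (h i).symm)⟩,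
    fun ⟨t, h⟩ => ⟨t, fun i => (congrFun (congrArg Subtype.val h) i).symm⟩⟩

theorem necklace_count_general (n k : ℕ) (hn : 1 ≤ n) :
    NCard n k * n = ∑ d ∈ (Nat.gcd n k).divisors, Nat.totient d * Nat.choose (n / d) (k / d) := by
  have : NeZero n := ⟨by omega⟩
  calc NCard n k * n
      = ∑ t : ZMod n, Nat.card (AddAction.fixedBy (OnesWords (ZMod n) k) t) := by
        rw [nCard_eq_card_orbits, sum_card_fixedBy_eq_card_orbits_mul_card, Nat.card_zmod]
    _ = ∑ t : ZMod n,
          if addOrderOf t ∣ k then (n / addOrderOf t).choose (k / addOrderOf t) else 0 := by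
        simp only [OnesWords.card_fixedBy, Nat.card_zmod]
    _ = ∑ d ∈ n.divisors, d.totient • if d ∣ k then (n / d).choose (k / d) else 0 := by
        rw [IsAddCyclic.sum_comp_addOrderOf fun d => if d ∣ k then (n / d).choose (k / d) else 0,
          ZMod.card]
    _ = _ := by
        simp only [smul_eq_mul, mul_ite, mul_zero]
        rw [← Finset.sum_filter, Nat.filter_dvd_divisors_eq_divisors_gcd (NeZero.ne n)]

/-- The number of binary necklaces of length `n` with `k` ones equals
`(1/n) · ∑_{d ∣ gcd(n,k)} φ(d) · C(n/d, k/d)`. -/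
theorem necklace_count (n k : ℕ) (hn : 1 ≤ n) (hk : k ≤ n) :
    NCard n k * n = ∑ d ∈ (Nat.gcd n k).divisors, Nat.totient d * Nat.choose (n / d) (k / d) :=
  necklace_count_general n k hn
end

section
/- For integers 0 ≤ k ≤ n with n ≥ 1, the number of binary Lyndon words of length n with exactly k ones equals (1/n) · Σ_{d | gcd(n,k)} μ(d) · C(n/d, k/d), where μ is the Möbius function. -/
open Finset

/-- `w` (as the word `w 0 w 1 ⋯ w (n-1)`) is a Lyndon word: it is strictly
lexicographically smaller than each of its nontrivial cyclic rotations. -/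
def IsLyndon (n : ℕ) (w : Fin n → Bool) : Prop :=
  ∀ t : ℕ, 0 < t → t < n → List.Lex (· < ·) (List.ofFn w) ((List.ofFn w).rotate t)


/-!
View a binary word of length `n` as a function on `ZMod n`, acted on by rotation. A word of
minimal period `p` (a divisor of `n`) is the `n / p`-th power of a primitive word of length `p`, so
sorting the `C(n, k)` words with `k` ones by `d = n / p` gives
`C(n, k) = ∑_{d ∣ gcd(n, k)} P(n / d, k / d)`, where `P(m, j)` counts primitive words of length
`m` with `j` ones. With `g = gcd(n, k)`, `n = n' g` and `k = k' g`, Möbius inversion of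
`m ↦ P(n' m, k' m)` yields `P(n, k) = ∑_{d ∣ g} μ(d) C(n / d, k / d)`. Finally, the rotation class
of a primitive word has exactly `n` elements and contains exactly one Lyndon word (its
lexicographically least rotation), so `P(n, k)` is `n` times the number of Lyndon words.
-/

open Function

namespace CyclicWord

variable {α : Type*} {N : ℕ}

def rotate (a : ZMod N) (w : ZMod N → α) : ZMod N → α := fun i => w (i + a)

@[simp]
lemma rotate_apply (a i : ZMod N) (w : ZMod N → α) : rotate a w i = w (i + a) := rfl

@[simp]
lemma rotate_zero (w : ZMod N → α) : rotate 0 w = w := by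
  ext; simp

lemma rotate_rotate (a b : ZMod N) (w : ZMod N → α) :
    rotate a (rotate b w) = rotate (a + b) w := by
  ext; simp [add_assoc]

lemma rotate_injective (a : ZMod N) : Injective (rotate (α := α) a) :=
  LeftInverse.injective (g := rotate (-a)) fun w => by simp [rotate_rotate]

lemma iterate_rotate_one (t : ℕ) (w : ZMod N → α) :
    (rotate 1)^[t] w = rotate (t : ZMod N) w := by
  induction t with
  | zero => simp
  | succ t ih => rw [iterate_succ_apply', ih, rotate_rotate, Nat.cast_succ, add_comm]

noncomputable def period (w : ZMod N → α) : ℕ := minimalPeriod (rotate 1) w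

lemma rotate_natCast_eq_self_iff {w : ZMod N → α} {t : ℕ} :
    rotate (t : ZMod N) w = w ↔ period w ∣ t := by
  rw [period, ← isPeriodicPt_iff_minimalPeriod_dvd, IsPeriodicPt, IsFixedPt, iterate_rotate_one]

lemma period_dvd (w : ZMod N → α) : period w ∣ N :=
  rotate_natCast_eq_self_iff.1 (by simp)

lemma period_eq_period_iff {β : Type*} {M : ℕ} {u : ZMod N → α} {v : ZMod M → β} :
    period u = period v ↔ ∀ t : ℕ, rotate (t : ZMod N) u = u ↔ rotate (t : ZMod M) v = v := by
  simp only [period, minimalPeriod_eq_minimalPeriod_iff, IsPeriodicPt, IsFixedPt,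
    iterate_rotate_one]

@[simp]
lemma period_rotate (a : ZMod N) (w : ZMod N → α) : period (rotate a w) = period w :=
  period_eq_period_iff.2 fun t => by
    rw [rotate_rotate, add_comm, ← rotate_rotate, (rotate_injective a).eq_iff]

lemma onesCount_rotate (a : ZMod N) (w : ZMod N → Bool) :
    onesCount N (rotate a w) = onesCount N w :=
  Nat.card_congr (Equiv.subtypeEquiv (Equiv.addRight a) fun _ => Iff.rfl)

section Extend

variable {e : ℕ} (he : e ∣ N)

/-- The `N / e`-th power of a word of length `e`. -/
def extend (w : ZMod e → α) : ZMod N → α := w ∘ ZMod.castHom he (ZMod e)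

lemma extend_injective : Injective (extend (α := α) he) :=
  (ZMod.castHom_surjective he).injective_comp_right

lemma rotate_extend (a : ZMod N) (w : ZMod e → α) :
    rotate a (extend he w) = extend he (rotate (ZMod.castHom he (ZMod e) a) w) := by
  ext i; simp [extend, map_add]

@[simp]
lemma period_extend (w : ZMod e → α) : period (extend he w) = period w :=
  period_eq_period_iff.2 fun t => by
    rw [rotate_extend, map_natCast, (extend_injective he).eq_iff]

end Extend

noncomputable def primitiveCount (n k : ℕ) : ℕ :=
  Nat.card {w : ZMod n → Bool // onesCount n w = k ∧ period w = n}

section NeZero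

variable [NeZero N]

lemma period_pos (w : ZMod N → α) : 0 < period w :=
  Nat.pos_of_ne_zero fun h => NeZero.ne N (Nat.eq_zero_of_zero_dvd (h ▸ period_dvd w))

lemma neZero_of_dvd {e : ℕ} (he : e ∣ N) : NeZero e :=
  ⟨fun h => NeZero.ne N (Nat.eq_zero_of_zero_dvd (h ▸ he))⟩

lemma exists_extend_eq {e : ℕ} (he : e ∣ N) {w : ZMod N → α} (hw : period w ∣ e) :
    ∃ w₀ : ZMod e → α, extend he w₀ = w := by
  refine ⟨fun j => w (j.val : ZMod N), funext fun i => ?_⟩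
  have hper : rotate ((e * (i.val / e) : ℕ) : ZMod N) w = w :=
    rotate_natCast_eq_self_iff.2 (hw.trans (dvd_mul_right _ _))
  calc extend he _ i = w ((i.val % e : ℕ) : ZMod N) := by
        rw [extend, comp_apply, ZMod.castHom_apply, ZMod.cast_eq_val, ZMod.val_natCast]
    _ = rotate ((e * (i.val / e) : ℕ) : ZMod N) w ((i.val % e : ℕ) : ZMod N) := by rw [hper]
    _ = w i := by rw [rotate_apply, ← Nat.cast_add, Nat.mod_add_div, ZMod.natCast_zmod_val]

lemma card_fiber_castHom {e : ℕ} (he : e ∣ N) (j : ZMod e) :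
    Nat.card {i : ZMod N // ZMod.castHom he (ZMod e) i = j} = N / e := by
  have := neZero_of_dvd he
  set f := (ZMod.castHom he (ZMod e)).toAddMonoidHom
  have hf : Surjective f := ZMod.castHom_surjective he
  have hker : Nat.card f.ker * e = N :=
    calc Nat.card f.ker * e = Nat.card f.ker * Nat.card (ZMod N ⧸ f.ker) := by
          rw [Nat.card_congr (QuotientAddGroup.quotientKerEquivOfSurjective f hf).toEquiv,
            Nat.card_zmod]
      _ = N := by rw [← AddSubgroup.index, AddSubgroup.card_mul_index, Nat.card_zmod]
  change Nat.card (f ⁻¹' {j}) = N / e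
  rw [Nat.card_congr (AddMonoidHom.fiberEquivKerOfSurjective hf j)]
  exact Nat.eq_div_of_mul_eq_left (NeZero.ne e) hker

lemma onesCount_extend {e : ℕ} (he : e ∣ N) (w : ZMod e → Bool) :
    onesCount N (extend he w) = N / e * onesCount e w := by
  have := neZero_of_dvd he
  rw [onesCount, ← Nat.card_congr (Equiv.sigmaSubtypeFiberEquivSubtype (ZMod.castHom he (ZMod e))
    (p := fun i => extend he w i = true) (q := fun j => w j = true) fun _ => Iff.rfl),
    Nat.card_sigma]
  simp only [card_fiber_castHom, Finset.sum_const, Finset.card_univ, smul_eq_mul]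
  rw [onesCount, Nat.card_eq_fintype_card, mul_comm]

lemma div_period_dvd_onesCount (w : ZMod N → Bool) : N / period w ∣ onesCount N w := by
  obtain ⟨w₀, hw₀⟩ := exists_extend_eq (period_dvd w) dvd_rfl
  exact ⟨_, hw₀ ▸ onesCount_extend (period_dvd w) w₀⟩

lemma onesCount_eq_card_filter (w : ZMod N → Bool) :
    onesCount N w = (Finset.univ.filter fun i => w i = true).card := by
  classical
  rw [onesCount, Nat.card_eq_fintype_card, Fintype.card_subtype]

lemma card_onesCount_eq (k : ℕ) :
    Nat.card {w : ZMod N → Bool // onesCount N w = k} = N.choose k := by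
  classical
  let toFinset : {w : ZMod N → Bool // onesCount N w = k} ≃
      {s : Finset (ZMod N) // s.card = k} :=
    { toFun w := ⟨Finset.univ.filter fun i => w.1 i = true,
        by rw [← onesCount_eq_card_filter, w.2]⟩
      invFun s := ⟨fun i => decide (i ∈ s.1), by simp [onesCount_eq_card_filter, s.2]⟩
      left_inv w := by ext i; simp
      right_inv s := by ext i; simp }
  rw [Nat.card_congr toFinset, Nat.card_eq_fintype_card, Fintype.card_finset_len, ZMod.card]

lemma card_period_eq_card_extend {e : ℕ} (he : e ∣ N) (P : (ZMod N → α) → Prop) :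
    Nat.card {w // P w ∧ period w = e} =
      Nat.card {w₀ : ZMod e → α // P (extend he w₀) ∧ period w₀ = e} := by
  refine (Nat.card_eq_of_bijective (fun w₀ => ⟨extend he w₀.1, by simpa using w₀.2⟩)
    ⟨fun u v huv => Subtype.ext (extend_injective he (congrArg Subtype.val huv)), ?_⟩).symm
  rintro ⟨w, hPw, hw⟩
  obtain ⟨w₀, rfl⟩ := exists_extend_eq he hw.dvd
  exact ⟨⟨w₀, hPw, by simpa using hw⟩, rfl⟩

lemma card_onesCount_div_period_eq {d k : ℕ} (hdN : d ∣ N) (hdk : d ∣ k) :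
    Nat.card {w : ZMod N → Bool // onesCount N w = k ∧ N / period w = d} =
      primitiveCount (N / d) (k / d) := by
  have hd : 0 < d := Nat.pos_of_dvd_of_pos hdN (NeZero.pos N)
  have he : N / d ∣ N := Nat.div_dvd_of_dvd hdN
  have hNe : N / (N / d) = d := Nat.div_div_self hdN (NeZero.ne N)
  have hperiod (w : ZMod N → Bool) : N / period w = d ↔ period w = N / d :=
    ⟨fun h => by rw [← h, Nat.div_div_self (period_dvd w) (NeZero.ne N)],
      fun h => by rw [h, hNe]⟩
  simp only [hperiod]
  rw [card_period_eq_card_extend he fun w => onesCount N w = k, primitiveCount]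
  congr! 3 with w₀
  rw [onesCount_extend, hNe, Nat.eq_div_iff_mul_eq_left hd.ne' hdk, mul_comm, eq_comm]

lemma choose_eq_sum_primitiveCount (k : ℕ) :
    N.choose k = ∑ d ∈ (N.gcd k).divisors, primitiveCount (N / d) (k / d) := by
  classical
  have hmaps : Set.MapsTo (fun w : ZMod N → Bool => N / period w)
      (Finset.univ.filter fun w => onesCount N w = k) (N.gcd k).divisors := by
    intro w hw
    rw [Finset.mem_coe, Finset.mem_filter] at hw
    rw [Finset.mem_coe, Nat.mem_divisors]
    exact ⟨Nat.dvd_gcd (Nat.div_dvd_of_dvd (period_dvd w)) (hw.2 ▸ div_period_dvd_onesCount w),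
      Nat.gcd_ne_zero_left (NeZero.ne N)⟩
  rw [← card_onesCount_eq k, Nat.card_eq_fintype_card, Fintype.card_subtype,
    Finset.card_eq_sum_card_fiberwise hmaps]
  refine Finset.sum_congr rfl fun d hd => ?_
  have hdg := Nat.dvd_of_mem_divisors hd
  rw [← card_onesCount_div_period_eq (hdg.trans (N.gcd_dvd_left k))
    (hdg.trans (N.gcd_dvd_right k)), Nat.card_eq_fintype_card, Fintype.card_subtype,
    Finset.filter_filter]

lemma finEquiv_apply (i : Fin N) : ZMod.finEquiv N i = (i : ℕ) := by
  obtain ⟨m, rfl⟩ := Nat.exists_eq_succ_of_ne_zero (NeZero.ne N)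
  exact (ZMod.natCast_zmod_val (ZMod.finEquiv (m + 1) i)).symm

def toList (w : ZMod N → α) : List α := List.ofFn (w ∘ ZMod.finEquiv N)

lemma toList_rotate (t : ℕ) (w : ZMod N → α) :
    toList (rotate (t : ZMod N) w) = (toList w).rotate t := by
  refine List.ext_getElem (by simp [toList]) fun i h₁ h₂ => ?_
  simp [toList, List.getElem_rotate, finEquiv_apply, ZMod.natCast_mod]

lemma toList_injective : Injective (toList (α := α) (N := N)) := fun _ _ h =>
  (ZMod.finEquiv N).surjective.injective_comp_right (List.ofFn_injective h)

lemma isLyndon_iff {w : ZMod N → Bool} :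
    IsLyndon N (w ∘ ZMod.finEquiv N) ↔
      ∀ t : ℕ, 0 < t → t < N → toList w < toList (rotate (t : ZMod N) w) := by
  simp only [toList_rotate]
  rfl

lemma period_eq_of_isLyndon {w : ZMod N → Bool} (hw : IsLyndon N (w ∘ ZMod.finEquiv N)) :
    period w = N := by
  refine (Nat.le_of_dvd (NeZero.pos N) (period_dvd w)).antisymm (not_lt.1 fun h => ?_)
  have := isLyndon_iff.1 hw _ (period_pos w) h
  rw [rotate_natCast_eq_self_iff.2 dvd_rfl] at this
  exact lt_irrefl _ this

lemma eq_zero_of_isLyndon_rotate {w : ZMod N → Bool} (hw : IsLyndon N (w ∘ ZMod.finEquiv N))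
    {a : ZMod N} (ha : IsLyndon N (rotate a w ∘ ZMod.finEquiv N)) : a = 0 := by
  by_contra h
  have hpos : 0 < a.val := ZMod.val_pos.2 h
  have hlt : a.val < N := a.val_lt
  have h₁ := isLyndon_iff.1 hw a.val hpos hlt
  have h₂ := isLyndon_iff.1 ha (N - a.val) (by omega) (by omega)
  rw [ZMod.natCast_zmod_val] at h₁
  rw [rotate_rotate, Nat.cast_sub hlt.le, ZMod.natCast_self, ZMod.natCast_zmod_val, zero_sub,
    neg_add_cancel, rotate_zero] at h₂
  exact lt_asymm h₁ h₂

lemma exists_isLyndon_rotate {w : ZMod N → Bool} (hw : period w = N) :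
    ∃ a : ZMod N, IsLyndon N (rotate a w ∘ ZMod.finEquiv N) := by
  obtain ⟨a, -, ha⟩ := Finset.exists_min_image Finset.univ (fun a => toList (rotate a w))
    Finset.univ_nonempty
  refine ⟨a, isLyndon_iff.2 fun t ht htN => ?_⟩
  refine (rotate_rotate (t : ZMod N) a w ▸ ha _ (Finset.mem_univ _)).lt_of_ne fun h => ?_
  have hper := rotate_natCast_eq_self_iff.1 (toList_injective h).symm
  rw [period_rotate, hw] at hper
  exact absurd (Nat.le_of_dvd ht hper) htN.not_ge

lemma card_primitive_eq_mul_card_isLyndon (P : (ZMod N → Bool) → Prop)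
    (hP : ∀ a w, P (rotate a w) ↔ P w) :
    Nat.card {w // P w ∧ period w = N} =
      N * Nat.card {w // IsLyndon N (w ∘ ZMod.finEquiv N) ∧ P w} := by
  rw [← Nat.card_eq_of_bijective
    (fun x : ZMod N × {w // IsLyndon N (w ∘ ZMod.finEquiv N) ∧ P w} =>
      (⟨rotate x.1 x.2.1, (hP _ _).2 x.2.2.2,
        by rw [period_rotate, period_eq_of_isLyndon x.2.2.1]⟩ : {w // P w ∧ period w = N}))
    ⟨?_, ?_⟩, Nat.card_prod, Nat.card_zmod]
  · rintro ⟨a, u, hu, _⟩ ⟨b, v, hv, _⟩ h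
    have huv : rotate (a - b) u = v := by
      refine rotate_injective b ?_
      rw [rotate_rotate, add_sub_cancel]
      exact congrArg Subtype.val h
    obtain rfl : a = b := sub_eq_zero.1 (eq_zero_of_isLyndon_rotate hu (huv ▸ hv))
    rw [sub_self, rotate_zero] at huv
    subst huv
    rfl
  · rintro ⟨w, hPw, hw⟩
    obtain ⟨a, ha⟩ := exists_isLyndon_rotate hw
    exact ⟨(-a, ⟨rotate a w, ha, (hP a w).2 hPw⟩), Subtype.ext (by simp [rotate_rotate])⟩

lemma card_filter_comp_finEquiv (w : ZMod N → Bool) :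
    (Finset.univ.filter fun i => (w ∘ ZMod.finEquiv N) i = true).card = onesCount N w := by
  rw [← Fintype.card_subtype, ← Nat.card_eq_fintype_card, onesCount]
  exact Nat.card_congr ((ZMod.finEquiv N).toEquiv.subtypeEquiv fun _ => Iff.rfl)

lemma card_isLyndon_fin_eq (k : ℕ) :
    Nat.card {w : Fin N → Bool //
        IsLyndon N w ∧ (Finset.univ.filter fun i => w i = true).card = k} =
      Nat.card {w : ZMod N → Bool // IsLyndon N (w ∘ ZMod.finEquiv N) ∧ onesCount N w = k} := by
  refine (Nat.card_congr (((ZMod.finEquiv N).symm.toEquiv.arrowCongr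
    (Equiv.refl Bool)).subtypeEquiv fun w => ?_)).symm
  change _ ↔ IsLyndon N (w ∘ ZMod.finEquiv N) ∧
    (Finset.univ.filter fun i => (w ∘ ZMod.finEquiv N) i = true).card = k
  rw [card_filter_comp_finEquiv]

end NeZero

lemma sum_divisors_primitiveCount {n k m : ℕ} (hn : 0 < n) (hnk : n.Coprime k) (hm : 0 < m) :
    ∑ d ∈ m.divisors, primitiveCount (n * d) (k * d) = (n * m).choose (k * m) := by
  have : NeZero (n * m) := ⟨(Nat.mul_pos hn hm).ne'⟩
  rw [choose_eq_sum_primitiveCount, Nat.gcd_mul_right, hnk.gcd_eq_one, one_mul,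
    ← Nat.sum_div_divisors m]
  refine Finset.sum_congr rfl fun d hd => ?_
  rw [Nat.mul_div_assoc _ (Nat.dvd_of_mem_divisors hd),
    Nat.mul_div_assoc _ (Nat.dvd_of_mem_divisors hd)]

open ArithmeticFunction ArithmeticFunction.Moebius in
lemma primitiveCount_eq_sum_moebius {n : ℕ} (hn : 0 < n) (k : ℕ) :
    (primitiveCount n k : ℤ) = ∑ d ∈ (n.gcd k).divisors, μ d * ((n / d).choose (k / d) : ℤ) := by
  set g := n.gcd k
  have hg : 0 < g := Nat.gcd_pos_of_pos_left k hn
  have hn' : 0 < n / g := Nat.div_pos (Nat.le_of_dvd hn (n.gcd_dvd_left k)) hg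
  have hng : n / g * g = n := Nat.div_mul_cancel (n.gcd_dvd_left k)
  have hkg : k / g * g = k := Nat.div_mul_cancel (n.gcd_dvd_right k)
  have hinv := (sum_eq_iff_sum_smul_moebius_eq
    (f := fun m => (primitiveCount (n / g * m) (k / g * m) : ℤ))
    (g := fun m => ((n / g * m).choose (k / g * m) : ℤ))).1
    (fun m hm => by
      exact_mod_cast sum_divisors_primitiveCount hn' (Nat.coprime_div_gcd_div_gcd hg) hm)
    g hg
  rw [Nat.sum_divisorsAntidiagonal fun a b => μ a • ((n / g * b).choose (k / g * b) : ℤ),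
    hng, hkg] at hinv
  rw [← hinv]
  refine Finset.sum_congr rfl fun d hd => ?_
  rw [← Nat.mul_div_assoc _ (Nat.dvd_of_mem_divisors hd),
    ← Nat.mul_div_assoc _ (Nat.dvd_of_mem_divisors hd), hng, hkg, smul_eq_mul]

end CyclicWord

theorem lyndon_count_general (n k : ℕ) (hn : 1 ≤ n) :
    (Nat.card {w : Fin n → Bool //
        IsLyndon n w ∧ (Finset.univ.filter (fun i => w i = true)).card = k} : ℤ) * n =
      ∑ d ∈ (Nat.gcd n k).divisors,
        ArithmeticFunction.moebius d * ((n / d).choose (k / d) : ℤ) := by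
  have : NeZero n := ⟨by omega⟩
  rw [CyclicWord.card_isLyndon_fin_eq, ← CyclicWord.primitiveCount_eq_sum_moebius hn,
    CyclicWord.primitiveCount, CyclicWord.card_primitive_eq_mul_card_isLyndon _
      fun a w => by rw [CyclicWord.onesCount_rotate]]
  push_cast
  ring

/-- The number of binary Lyndon words of length `n` with `k` ones equals
`(1/n) · ∑_{d ∣ gcd(n,k)} μ(d) · C(n/d, k/d)`. -/
theorem lyndon_count (n k : ℕ) (hn : 1 ≤ n) (hk : k ≤ n) :
    (Nat.card {w : Fin n → Bool //
        IsLyndon n w ∧ (Finset.univ.filter (fun i => w i = true)).card = k} : ℤ) * n =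
      ∑ d ∈ (Nat.gcd n k).divisors,
        ArithmeticFunction.moebius d * ((n / d).choose (k / d) : ℤ) :=
  lyndon_count_general n k hn
end

section
/- For any n ≥ 1, the polynomial identity Σ_{k=0}^{n−1} |S_1(n,k)| x^k · (1+x) · n = Σ_{d | n} μ(d) · (1 − (−x)^d)^{n/d} holds in ℤ[x], where S_1(n,k) is the set of k-element subsets of {1,…,n−1} whose elements sum to 1 modulo n. -/
open Finset

/-!
Sum `ζ⁻¹ ∏_{i<n} (1 + x ζ^i)` over the `n`-th roots of unity `ζ` in two ways. Expanding the
product into subsets `A ⊆ {0, …, n-1}`, the roots-of-unity filter keeps exactly the `A` with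
`∑ A ≡ 1 (mod n)`, each counted `n` times, and adjoining or removing `0` accounts for the factor
`1 + x`. Grouping the roots by their order `d ∣ n` instead, a root of order `d` makes the
product periodic with value `(1 - (-x)^d)^{n/d}`, and the primitive `d`-th roots sum to `μ(d)`
by Möbius inversion of `∑_{ζ^m = 1} ζ = [m = 1]`.
-/

theorem Finset.prod_range_mul_eq_pow_of_periodic {M : Type*} [CommMonoid M] {f : ℕ → M} {m : ℕ}
    (hf : Function.Periodic f m) (g : ℕ) :
    ∏ i ∈ range (g * m), f i = (∏ i ∈ range m, f i) ^ g := by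
  induction g with
  | zero => simp
  | succ g ih =>
    rw [Nat.succ_mul, prod_range_add, ih, pow_succ]
    congr 1
    exact prod_congr rfl fun i _ => by rw [add_comm]; exact hf.nat_mul g i

theorem Finset.prod_one_add_mul_pow {R : Type*} [CommSemiring R] (s : Finset ℕ) (x ζ : R) :
    ∏ i ∈ s, (1 + x * ζ ^ i) = ∑ A ∈ s.powerset, x ^ #A * ζ ^ ∑ i ∈ A, i := by
  rw [prod_one_add]
  exact sum_congr rfl fun A _ => by rw [prod_mul_distrib, prod_const, prod_pow_eq_pow_sum]

theorem Finset.sum_powerset_filter_pow_card {α R : Type*} [CommSemiring R] (s : Finset α)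
    (p : Finset α → Prop) [DecidablePred p] (x : R) :
    ∑ A ∈ s.powerset with p A, x ^ #A =
      ∑ k ∈ range (#s + 1), (#{A ∈ s.powerset | #A = k ∧ p A} : R) * x ^ k := by
  rw [← sum_fiberwise_of_maps_to (g := card) (t := range (#s + 1))]
  · refine sum_congr rfl fun k _ => ?_
    rw [filter_filter, sum_congr rfl fun A hA => by rw [(mem_filter.mp hA).2.2], sum_const,
      nsmul_eq_mul]
    simp only [and_comm]
  · intro A hA
    exact mem_range_succ_iff.mpr (card_le_card (mem_powerset.mp (mem_filter.mp hA).1))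

theorem Finset.sum_powerset_insert_filter_pow_card {α R : Type*} [DecidableEq α] [CommSemiring R]
    {s : Finset α} {a : α} (ha : a ∉ s) (p : Finset α → Prop) [DecidablePred p]
    (hp : ∀ A ⊆ s, p (insert a A) ↔ p A) (x : R) :
    ∑ A ∈ (insert a s).powerset with p A, x ^ #A = (1 + x) * ∑ A ∈ s.powerset with p A, x ^ #A := by
  rw [sum_filter, sum_powerset_insert ha, sum_filter, add_mul, one_mul, mul_sum]
  congr 1
  refine sum_congr rfl fun A hA => ?_
  have hA : A ⊆ s := mem_powerset.mp hA
  simp only [hp A hA, card_insert_of_notMem fun h => ha (hA h), pow_succ', mul_ite, mul_zero]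

theorem Nat.dvd_add_sub_one_iff_mod_eq_one_mod {n : ℕ} (hn : 0 < n) (s : ℕ) :
    n ∣ s + (n - 1) ↔ s % n = 1 % n := by
  rw [← ZMod.natCast_eq_zero_iff, ← ZMod.natCast_eq_natCast_iff', Nat.cast_add,
    Nat.cast_sub hn, ZMod.natCast_self, Nat.cast_one, zero_sub, ← sub_eq_add_neg, sub_eq_zero]

theorem sum_powerset_range_pow_card_eq_one_add_mul_sum_sCard {R : Type*} [CommSemiring R]
    {n : ℕ} (hn : 0 < n) (r : ℕ) (x : R) :
    ∑ A ∈ (range n).powerset with (∑ a ∈ A, a) % n = r, x ^ #A =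
      (1 + x) * ∑ k ∈ range n, (SCard n k r : R) * x ^ k := by
  have hrange : range n = insert 0 (Icc 1 (n - 1)) := by
    ext i
    simp only [mem_range, mem_insert, mem_Icc]
    omega
  have h0 : 0 ∉ Icc 1 (n - 1) := by simp
  conv_lhs => rw [hrange]
  rw [sum_powerset_insert_filter_pow_card h0, sum_powerset_filter_pow_card,
    Nat.card_Icc, Nat.add_sub_cancel, Nat.sub_add_cancel hn]
  · rfl
  · intro A hA
    rw [sum_insert fun h => h0 (hA h), zero_add]

open Polynomial

namespace IsPrimitiveRoot

variable {R : Type*} [CommRing R] [IsDomain R]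

theorem sum_nthRootsFinset_pow {ω : R} {n : ℕ} (hω : IsPrimitiveRoot ω n) (hn : 0 < n) (j : ℕ) :
    ∑ ζ ∈ nthRootsFinset n (1 : R), ζ ^ j = if n ∣ j then (n : R) else 0 := by
  have hmem : ∀ {ζ : R}, ζ ∈ nthRootsFinset n (1 : R) ↔ ζ ^ n = 1 :=
    Polynomial.mem_nthRootsFinset hn 1
  split_ifs with hj
  · obtain ⟨c, rfl⟩ := hj
    rw [sum_congr rfl fun ζ hζ => by rw [pow_mul, hmem.mp hζ, one_pow], sum_const,
      hω.card_nthRootsFinset, nsmul_one]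
  · have hωn : ω * ω ^ (n - 1) = 1 := by rw [← pow_succ', Nat.sub_add_cancel hn, hω.pow_eq_one]
    have hshift : ω ^ j * ∑ ζ ∈ nthRootsFinset n (1 : R), ζ ^ j =
        ∑ ζ ∈ nthRootsFinset n (1 : R), ζ ^ j := by
      rw [mul_sum]
      refine sum_nbij' (ω * ·) (ω ^ (n - 1) * ·) (fun ζ hζ => ?_) (fun ζ hζ => ?_)
        (fun ζ _ => ?_) (fun ζ _ => ?_) (fun ζ _ => (mul_pow ω ζ j).symm)
      · rw [hmem] at hζ ⊢
        rw [mul_pow, hω.pow_eq_one, hζ, one_mul]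
      · rw [hmem] at hζ ⊢
        rw [mul_pow, pow_right_comm, hω.pow_eq_one, one_pow, hζ, one_mul]
      · rw [← mul_assoc, mul_comm _ ω, hωn, one_mul]
      · rw [← mul_assoc, hωn, one_mul]
    have hωj : ω ^ j - 1 ≠ 0 := sub_ne_zero.mpr fun h => hj (hω.dvd_of_pow_eq_one j h)
    exact (mul_eq_zero.mp (by rw [sub_mul, one_mul, hshift, sub_self])).resolve_left hωj

theorem prod_range_one_add_mul_pow {ζ : R} {d : ℕ} (hζ : IsPrimitiveRoot ζ d) (hd : 0 < d)
    (x : R) : ∏ i ∈ range d, (1 + x * ζ ^ i) = 1 - (-x) ^ d := by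
  have h := congrArg (eval 1) (X_pow_sub_C_eq_prod hζ hd (rfl : (-x) ^ d = _))
  simp only [eval_sub, eval_pow, eval_X, eval_C, eval_prod, one_pow] at h
  rw [h]
  exact prod_congr rfl fun i _ => by ring

theorem prod_range_one_add_mul_pow_of_dvd {ζ : R} {d n : ℕ} (hζ : IsPrimitiveRoot ζ d)
    (hd : 0 < d) (hdn : d ∣ n) (x : R) :
    ∏ i ∈ range n, (1 + x * ζ ^ i) = (1 - (-x) ^ d) ^ (n / d) := by
  have hper : Function.Periodic (fun i => 1 + x * ζ ^ i) d := fun i => by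
    simp only [pow_add, hζ.pow_eq_one, mul_one]
  rw [← Nat.div_mul_cancel hdn, Finset.prod_range_mul_eq_pow_of_periodic hper,
    hζ.prod_range_one_add_mul_pow hd, Nat.mul_div_cancel _ hd]

theorem pairwiseDisjoint_primitiveRoots (s : Finset ℕ) :
    (s : Set ℕ).PairwiseDisjoint (primitiveRoots · R) :=
  fun _ _ _ _ hkl => IsPrimitiveRoot.disjoint hkl

theorem sum_primitiveRoots_eq_moebius {ω : R} {n : ℕ} (hω : IsPrimitiveRoot ω n) (hn : 0 < n) :
    ∑ ζ ∈ primitiveRoots n R, ζ = ArithmeticFunction.moebius n := by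
  classical
  have hinv := (ArithmeticFunction.sum_eq_iff_sum_mul_moebius_eq_on {m | m ∣ n}
    (fun _ _ => dvd_trans) (f := fun m => ∑ ζ ∈ primitiveRoots m R, ζ)
    (g := fun m => if m = 1 then 1 else 0)).mp ?_ n hn dvd_rfl
  · rw [← hinv, Nat.sum_divisorsAntidiagonal'
      (fun a b => (ArithmeticFunction.moebius a : R) * if b = 1 then 1 else 0)]
    simp [mul_ite, sum_ite_eq', hn.ne']
  · intro m hm hmn
    obtain ⟨k, rfl⟩ := hmn
    rw [← sum_biUnion (pairwiseDisjoint_primitiveRoots _), ← nthRoots_one_eq_biUnion_primitiveRoots]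
    have h := (hω.pow hn (mul_comm m k)).sum_nthRootsFinset_pow hm 1
    simp only [pow_one, Nat.dvd_one] at h
    rw [h]
    split_ifs with h1 <;> simp [h1]

-- `ζ ^ (n - 1)` is `ζ⁻¹` for every `n`-th root of unity, written so as to need no inverses.
theorem sum_nthRootsFinset_pow_pred_mul_prod_eq_sum_powerset {ω : R} {n : ℕ}
    (hω : IsPrimitiveRoot ω n) (hn : 0 < n) (x : R) :
    ∑ ζ ∈ nthRootsFinset n (1 : R), ζ ^ (n - 1) * ∏ i ∈ range n, (1 + x * ζ ^ i) =
      n * ∑ A ∈ (range n).powerset with (∑ a ∈ A, a) % n = 1 % n, x ^ #A := by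
  simp_rw [Finset.prod_one_add_mul_pow, mul_sum]
  rw [sum_comm, sum_filter]
  refine sum_congr rfl fun A _ => ?_
  have hpow : ∀ ζ : R, ζ ^ (n - 1) * (x ^ #A * ζ ^ ∑ a ∈ A, a) =
      x ^ #A * ζ ^ ((∑ a ∈ A, a) + (n - 1)) := fun ζ => by ring
  rw [sum_congr rfl fun ζ _ => hpow ζ, ← mul_sum, hω.sum_nthRootsFinset_pow hn]
  simp only [Nat.dvd_add_sub_one_iff_mod_eq_one_mod hn, mul_ite, mul_zero, mul_comm]

end IsPrimitiveRoot

theorem sum_primitiveRoots_inv {K : Type*} [Field K] (k : ℕ) :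
    ∑ ζ ∈ primitiveRoots k K, ζ⁻¹ = ∑ ζ ∈ primitiveRoots k K, ζ := by
  rcases k.eq_zero_or_pos with rfl | hk
  · simp
  refine sum_nbij' (·⁻¹) (·⁻¹) (fun ζ hζ => ?_) (fun ζ hζ => ?_) (fun ζ _ => inv_inv ζ)
    (fun ζ _ => inv_inv ζ) (fun _ _ => rfl)
  all_goals simpa only [mem_coe, mem_primitiveRoots hk, IsPrimitiveRoot.inv_iff] using hζ

namespace IsPrimitiveRoot

variable {K : Type*} [Field K] {ω : K} {n : ℕ}

theorem sum_nthRootsFinset_pow_pred_mul_prod_eq_sum_moebius (hω : IsPrimitiveRoot ω n)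
    (hn : 0 < n) (x : K) :
    ∑ ζ ∈ nthRootsFinset n (1 : K), ζ ^ (n - 1) * ∏ i ∈ range n, (1 + x * ζ ^ i) =
      ∑ d ∈ n.divisors, ArithmeticFunction.moebius d * (1 - (-x) ^ d) ^ (n / d) := by
  classical
  rw [nthRoots_one_eq_biUnion_primitiveRoots, sum_biUnion (pairwiseDisjoint_primitiveRoots _)]
  refine sum_congr rfl fun d hd => ?_
  have hdn : d ∣ n := Nat.dvd_of_mem_divisors hd
  have hd0 : 0 < d := Nat.pos_of_mem_divisors hd
  have hterm : ∀ ζ ∈ primitiveRoots d K, ζ ^ (n - 1) * ∏ i ∈ range n, (1 + x * ζ ^ i) =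
      ζ⁻¹ * (1 - (-x) ^ d) ^ (n / d) := fun ζ hζ => by
    have hζ := (mem_primitiveRoots hd0).mp hζ
    have hζn : ζ ^ (n - 1) * ζ = 1 := by
      rw [← pow_succ, Nat.sub_add_cancel hn, hζ.pow_eq_one_iff_dvd]
      exact hdn
    rw [hζ.prod_range_one_add_mul_pow_of_dvd hd0 hdn, eq_inv_of_mul_eq_one_left hζn]
  rw [sum_congr rfl hterm, ← sum_mul, sum_primitiveRoots_inv,
    (hω.pow hn (Nat.div_mul_cancel hdn).symm).sum_primitiveRoots_eq_moebius hd0]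

theorem S1_generating_identity (hω : IsPrimitiveRoot ω n) (hn : 0 < n) (x : K) :
    (∑ k ∈ range n, (SCard n k (1 % n) : K) * x ^ k) * (1 + x) * n =
      ∑ d ∈ n.divisors, ArithmeticFunction.moebius d * (1 - (-x) ^ d) ^ (n / d) := by
  rw [← hω.sum_nthRootsFinset_pow_pred_mul_prod_eq_sum_moebius hn x,
    hω.sum_nthRootsFinset_pow_pred_mul_prod_eq_sum_powerset hn x,
    sum_powerset_range_pow_card_eq_one_add_mul_sum_sCard hn]
  ring

end IsPrimitiveRoot

open Polynomial in
/-- The generating polynomial identity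
`(∑_k |S₁(n,k)| xᵏ) · (1+x) · n = ∑_{d ∣ n} μ(d) (1-(-x)^d)^{n/d}` in `ℤ[x]`. -/
theorem S1_generating_function (n : ℕ) (hn : 1 ≤ n) :
    (∑ k ∈ Finset.range n, C (SCard n k (1 % n) : ℤ) * X ^ k) * (1 + X) * (n : ℤ[X]) =
      ∑ d ∈ n.divisors, C (ArithmeticFunction.moebius d) * (1 - (-X) ^ d) ^ (n / d) := by
  apply map_injective (Int.castRingHom ℂ) Int.cast_injective
  refine Polynomial.funext fun z => ?_
  simpa [Polynomial.map_sum, eval_finsetSum] using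
    (Complex.isPrimitiveRoot_exp n (Nat.pos_iff_ne_zero.mp hn)).S1_generating_identity hn z
end

section
/- For integers n ≥ 1, 0 ≤ k ≤ n, and 0 ≤ r < n, the number of k-element subsets of {1,…,n} whose elements sum to r modulo n equals (1/n) · Σ_{d | gcd(n,k)} C(n/d, k/d) · c_d(r) · (−1)^{k/d + k}, where c_d(r) = Σ_{1≤j≤d, gcd(j,d)=1} ζ_d^{jr} is the Ramanujan sum with ζ_d a primitive d-th root of unity. -/
/-!
Roots-of-unity filter: `n · #{A | ∑ A ≡ r}` equals `∑_{ωⁿ = 1} ω⁻ʳ eₖ(ω¹, …, ωⁿ)`.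
If `ω` has order `d ∣ n`, then `∏_{a ≤ n} (X + ωᵃ) = (X^d - (-1)^d)^(n/d)`, so by Vieta
`eₖ(ω¹, …, ωⁿ)` vanishes unless `d ∣ k`, when it is `(-1)^(k/d + k) C(n/d, k/d)`.
Grouping the `ω` by their order `d` leaves `∑ ω⁻ʳ` over the primitive `d`-th roots, which is
the Ramanujan sum `c_d(r)` by Möbius inversion of `∑_{ω^d = 1} ωᵐ = d · [d ∣ m]`.
-/

open Finset

theorem Nat.divisors_gcd_eq_filter (a : ℕ) {b : ℕ} (hb : b ≠ 0) :
    (Nat.gcd a b).divisors = b.divisors.filter (· ∣ a) := by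
  ext j
  have := Nat.gcd_ne_zero_right (m := a) hb
  simp only [Nat.mem_divisors, mem_filter, Nat.dvd_gcd_iff]
  tauto

theorem Int.divisors_gcd_natCast (m : ℤ) {d : ℕ} (hd : d ≠ 0) :
    (Int.gcd m d).divisors = d.divisors.filter (fun j : ℕ => (j : ℤ) ∣ m) := by
  simp only [Int.gcd, Int.natAbs_natCast, Nat.divisors_gcd_eq_filter _ hd, Int.natCast_dvd]

theorem ramanujanSum_neg (d : ℕ) (m : ℤ) : ramanujanSum d (-m) = ramanujanSum d m := by
  simp only [ramanujanSum, Int.neg_gcd]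

theorem Finset.prod_Icc_one_eq_prod_range {M : Type*} [CommMonoid M] {f : ℕ → M} {n : ℕ}
    (h : f n = f 0) : ∏ a ∈ Icc 1 n, f a = ∏ a ∈ range n, f a := by
  rcases n.eq_zero_or_pos with rfl | hn
  · simp
  rw [range_eq_Ico, prod_eq_prod_Ico_succ_bot hn, ← Ico_add_one_right_eq_Icc,
    prod_Ico_succ_top (by omega), h, mul_comm]

theorem Function.Periodic.prod_range_mul {M : Type*} [CommMonoid M] {f : ℕ → M} {d : ℕ}
    (hf : Function.Periodic f d) (m : ℕ) :
    ∏ a ∈ range (d * m), f a = (∏ a ∈ range d, f a) ^ m := by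
  induction m with
  | zero => simp
  | succ m ih =>
    rw [Nat.mul_succ, prod_range_add, ih, pow_succ]
    congr 1
    exact prod_congr rfl fun i _ => by simpa [add_comm, mul_comm] using hf.nat_mul m i

theorem Polynomial.coeff_X_pow_sub_C_pow {R : Type*} [CommRing R] {d : ℕ} (hd : 0 < d)
    (c : R) (m j : ℕ) :
    ((X ^ d - C c) ^ m).coeff j =
      if d ∣ j then (-c) ^ (m - j / d) * m.choose (j / d) else 0 := by
  have : (X ^ d - C c) ^ m = expand R d ((X + C (-c)) ^ m) := by
    simp [sub_eq_add_neg]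
  rw [this, coeff_expand hd, coeff_X_add_C_pow]

section RootsOfUnity

open Polynomial

variable {K : Type*} [Field K] {ζ : K} {n : ℕ}

theorem IsPrimitiveRoot.sum_nthRootsFinset {M : Type*} [AddCommMonoid M]
    (hζ : IsPrimitiveRoot ζ n) (f : K → M) :
    ∑ ω ∈ nthRootsFinset n (1 : K), f ω = ∑ i ∈ range n, f (ζ ^ i) := by
  classical
  rw [nthRootsFinset_def, ← Multiset.toFinset_eq (hζ.nthRoots_one_nodup), Finset.sum_mk,
    hζ.nthRoots_eq (one_pow n)]
  simp [Finset.sum, Multiset.map_map]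

theorem IsPrimitiveRoot.sum_nthRootsFinset_zpow (hζ : IsPrimitiveRoot ζ n) (m : ℤ) :
    ∑ ω ∈ nthRootsFinset n (1 : K), ω ^ m = if (n : ℤ) ∣ m then (n : K) else 0 := by
  have hpow : ∀ i : ℕ, (ζ ^ i) ^ m = (ζ ^ m) ^ i := fun i => by
    rw [← zpow_natCast, ← zpow_natCast, ← zpow_mul, ← zpow_mul, mul_comm]
  have hper : (ζ ^ m) ^ n = 1 := by rw [← hpow, hζ.pow_eq_one, one_zpow]
  rw [hζ.sum_nthRootsFinset]
  simp only [hpow]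
  split_ifs with h
  · simp [(hζ.zpow_eq_one_iff_dvd m).mpr h]
  · rw [geom_sum_eq (mt (hζ.zpow_eq_one_iff_dvd m).mp h), hper, sub_self, zero_div]

theorem IsPrimitiveRoot.card_filter_mod_eq_mul {ι : Type*} {r : ℕ} (hζ : IsPrimitiveRoot ζ n)
    (hr : r < n) (s : Finset ι) (f : ι → ℕ) :
    (#{x ∈ s | f x % n = r} : K) * n =
      ∑ ω ∈ nthRootsFinset n (1 : K), ω ^ (-(r : ℤ)) * ∑ x ∈ s, ω ^ f x := by
  have hdvd : ∀ x, (n : ℤ) ∣ (f x : ℤ) - r ↔ f x % n = r := fun x => by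
    rw [← Nat.modEq_iff_dvd, Nat.ModEq, Nat.mod_eq_of_lt hr, eq_comm]
  have hshift : ∀ x, ∀ ω ∈ nthRootsFinset n (1 : K),
      ω ^ (-(r : ℤ)) * ω ^ f x = ω ^ ((f x : ℤ) - r) := fun x ω hω => by
    rw [← zpow_natCast, ← zpow_add₀ (ne_zero_of_mem_nthRootsFinset one_ne_zero hω),
      neg_add_eq_sub]
  simp_rw [mul_sum]
  rw [sum_comm, natCast_card_filter, sum_mul]
  refine sum_congr rfl fun x _ => ?_
  rw [sum_congr rfl (hshift x), hζ.sum_nthRootsFinset_zpow]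
  simp only [hdvd, ite_mul, one_mul, zero_mul]

theorem IsPrimitiveRoot.prod_range_X_add_C_pow (hζ : IsPrimitiveRoot ζ n) (hn : 0 < n) :
    ∏ i ∈ range n, (X + C (ζ ^ i)) = X ^ n - C ((-1) ^ n) := by
  rw [X_pow_sub_C_eq_prod hζ hn (rfl : (-1 : K) ^ n = _)]
  simp [sub_eq_add_neg]

theorem IsPrimitiveRoot.sum_powersetCard_Icc_prod_pow {d k : ℕ} (hζ : IsPrimitiveRoot ζ d)
    (hd : 0 < d) (hdn : d ∣ n) (hk : k ≤ n) :
    ∑ A ∈ powersetCard k (Icc 1 n), ∏ a ∈ A, ζ ^ a =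
      if d ∣ k then (-1 : K) ^ (k / d + k) * ((n / d).choose (k / d) : K) else 0 := by
  obtain ⟨m, rfl⟩ := hdn
  have hper : Function.Periodic (fun a => X + C (ζ ^ a)) d := fun a => by
    simp [pow_add, hζ.pow_eq_one]
  have hprod : ∏ a ∈ Icc 1 (d * m), (X + C (ζ ^ a)) = (X ^ d - C ((-1) ^ d)) ^ m := by
    rw [prod_Icc_one_eq_prod_range (by simp [pow_mul, hζ.pow_eq_one]), hper.prod_range_mul,
      hζ.prod_range_X_add_C_pow hd]
  have hcoeff := prod_X_add_C_coeff (Icc 1 (d * m)) (ζ ^ ·) (k := d * m - k) (by simp)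
  rw [Nat.card_Icc, add_tsub_cancel_right, Nat.sub_sub_self hk, hprod,
    coeff_X_pow_sub_C_pow hd] at hcoeff
  rw [← hcoeff, Nat.mul_div_cancel_left m hd]
  by_cases hdk : d ∣ k
  · obtain ⟨j, rfl⟩ := hdk
    have hj : j ≤ m := Nat.le_of_mul_le_mul_left hk hd
    rw [← Nat.mul_sub, if_pos (dvd_mul_right d _), if_pos (dvd_mul_right d _),
      Nat.mul_div_cancel_left _ hd, Nat.mul_div_cancel_left _ hd, Nat.sub_sub_self hj,
      Nat.choose_symm hj, neg_pow, ← pow_mul, ← pow_add]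
  · rw [if_neg hdk, if_neg ((Nat.dvd_sub_iff_right hk (dvd_mul_right d m)).not.mpr hdk)]

open ArithmeticFunction in
theorem IsPrimitiveRoot.sum_primitiveRoots_zpow (hζ : IsPrimitiveRoot ζ n) (m : ℤ) :
    ∑ ω ∈ primitiveRoots n K, ω ^ m = ramanujanSum n m := by
  classical
  rcases n.eq_zero_or_pos with rfl | hn
  · simp [ramanujanSum]
  have hsum : ∀ e > 0, e ∈ {e | e ∣ n} → ∑ i ∈ e.divisors, ∑ ω ∈ primitiveRoots i K, ω ^ m =
      if (e : ℤ) ∣ m then (e : K) else 0 := by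
    intro e _ he
    have hroot : IsPrimitiveRoot (ζ ^ (n / e)) e := hζ.pow hn (Nat.div_mul_cancel he).symm
    rw [← sum_biUnion fun i _ j _ hij => IsPrimitiveRoot.disjoint hij,
      ← nthRoots_one_eq_biUnion_primitiveRoots, hroot.sum_nthRootsFinset_zpow]
  have hinv := (sum_eq_iff_sum_mul_moebius_eq_on {e | e ∣ n}
    (fun _ _ h₁ h₂ => h₁.trans h₂)).mp hsum n hn dvd_rfl
  rw [← hinv, Nat.sum_divisorsAntidiagonal'
      (fun x y => (moebius x : K) * if (y : ℤ) ∣ m then (y : K) else 0),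
    ramanujanSum, Int.divisors_gcd_natCast m hn.ne', sum_filter]
  push_cast
  refine sum_congr rfl fun j _ => ?_
  split_ifs <;> ring

end RootsOfUnity

theorem Sbar_count_general (n k r : ℕ) (hk : k ≤ n) (hr : r < n) :
    (SbarCard n k r : ℤ) * n =
      ∑ d ∈ (Nat.gcd n k).divisors,
        ((n / d).choose (k / d) : ℤ) * ramanujanSum d r * (-1) ^ (k / d + k) := by
  have hn : 0 < n := Nat.zero_lt_of_lt hr
  have hS : SbarCard n k r = #{A ∈ powersetCard k (Icc 1 n) | (∑ a ∈ A, a) % n = r} := by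
    rw [SbarCard, powersetCard_eq_filter, filter_filter]
  have hE : ∀ d ∈ n.divisors, ∀ ω ∈ primitiveRoots d ℂ,
      ∑ A ∈ powersetCard k (Icc 1 n), ω ^ (∑ a ∈ A, a) =
        if d ∣ k then (-1 : ℂ) ^ (k / d + k) * ((n / d).choose (k / d) : ℂ) else 0 := by
    intro d hd ω hω
    simp_rw [← prod_pow_eq_pow_sum]
    exact (isPrimitiveRoot_of_mem_primitiveRoots hω).sum_powersetCard_Icc_prod_pow
      (Nat.pos_of_mem_divisors hd) (Nat.dvd_of_mem_divisors hd) hk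
  have hc : ∀ d ∈ n.divisors, ∑ ω ∈ primitiveRoots d ℂ, ω ^ (-(r : ℤ)) = ramanujanSum d r :=
    fun d hd => by
      rw [(Complex.isPrimitiveRoot_exp d (Nat.pos_of_mem_divisors hd).ne').sum_primitiveRoots_zpow,
        ramanujanSum_neg]
  apply Int.cast_injective (α := ℂ)
  push_cast [hS, (Complex.isPrimitiveRoot_exp n hn.ne').card_filter_mod_eq_mul hr,
    IsPrimitiveRoot.nthRoots_one_eq_biUnion_primitiveRoots]
  rw [sum_biUnion fun i _ j _ hij => IsPrimitiveRoot.disjoint hij, Nat.gcd_comm,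
    Nat.divisors_gcd_eq_filter k hn.ne', sum_filter]
  refine sum_congr rfl fun d hd => ?_
  rw [sum_congr rfl fun ω hω => by rw [hE d hd ω hω], ← sum_mul, hc d hd]
  split_ifs <;> ring

/-- `|S̄ᵣ(n,k)| = (1/n) ∑_{d ∣ gcd(n,k)} C(n/d,k/d) c_d(r) (-1)^{k/d+k}`. -/
theorem Sbar_count (n k r : ℕ) (hn : 1 ≤ n) (hk : k ≤ n) (hr : r < n) :
    (SbarCard n k r : ℤ) * n =
      ∑ d ∈ (Nat.gcd n k).divisors,
        ((n / d).choose (k / d) : ℤ) * ramanujanSum d r * (-1) ^ (k / d + k) :=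
  Sbar_count_general n k r hk hr
end

section
/- For integers n ≥ 1, 0 ≤ k ≤ n, and 0 ≤ r < n, the number of binary necklaces of length n with k ones whose co-period divides r equals (1/n) · Σ_{d | gcd(n,k)} C(n/d, k/d) · c_d(r), where c_d(r) is the Ramanujan sum. -/
open Finset

/-!
Burnside's lemma turns `|Nᵣ(n,k)| · n` into the sum of the co-periods `j` (the orders of the
stabilizers under rotation) of the words with `k` ones and `j ∣ r`. Möbius inversion gives
`∑_{d ∣ j} c_d(r) = j · [j ∣ r]`, so the sum becomes `∑_{d ∣ n} c_d(r) · #{w : d ∣ co-period of w}`.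
In the cyclic group `ℤ/n` the stabilizer has order divisible by `d` iff it contains the subgroup
`H` of order `d`, and the words fixed by `H` are the words on `(ℤ/n)/H`, each of whose `k/d` ones
is repeated `d` times: there are `C(n/d, k/d)` of them when `d ∣ k` and none otherwise.
-/

section Ramanujan

open ArithmeticFunction

def dvdIndicatorId (r : ℕ) : ArithmeticFunction ℤ :=
  ⟨fun j => if j ∣ r then (j : ℤ) else 0, by simp⟩

theorem ramanujanSum_eq_dvdIndicatorId_mul_moebius (r : ℕ) {d : ℕ} (hd : d ≠ 0) :
    ramanujanSum d r = (dvdIndicatorId r * (moebius : ArithmeticFunction ℤ)) d := by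
  rw [mul_apply, Nat.sum_divisorsAntidiagonal (f := fun a b => dvdIndicatorId r a * moebius b),
    ramanujanSum, Int.gcd_natCast_natCast, Nat.gcd_comm,
    ← Nat.divisors_filter_dvd_of_dvd hd (Nat.gcd_dvd_left d r), Finset.sum_filter]
  refine Finset.sum_congr rfl fun j hj => ?_
  simp only [Nat.dvd_gcd_iff, Nat.dvd_of_mem_divisors hj, true_and, dvdIndicatorId, coe_mk]
  split_ifs <;> simp

theorem sum_divisors_ramanujanSum (r m : ℕ) :
    ∑ d ∈ m.divisors, ramanujanSum d r = if m ∣ r then (m : ℤ) else 0 := by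
  have h := coe_mul_zeta_apply (f := dvdIndicatorId r * (moebius : ArithmeticFunction ℤ)) (x := m)
  rw [mul_assoc, moebius_mul_coe_zeta, mul_one] at h
  rw [Finset.sum_congr rfl fun d hd =>
    ramanujanSum_eq_dvdIndicatorId_mul_moebius r (Nat.pos_of_mem_divisors hd).ne', ← h]
  rfl

end Ramanujan

open AddAction

section Burnside

variable {G X : Type*} [AddGroup G] [Finite G] [AddAction G X] [Fintype X]

theorem AddAction.sum_card_stabilizer_eq_card_orbits_mul_card :
    ∑ x : X, Nat.card (stabilizer G x) = Nat.card (orbitRel.Quotient G X) * Nat.card G := by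
  classical
  have := Fintype.ofFinite G
  have := Fintype.ofFinite (orbitRel.Quotient G X)
  rw [Nat.card_eq_fintype_card, Nat.card_eq_fintype_card,
    ← sum_card_fixedBy_eq_card_orbits_mul_card_addGroup]
  simp only [Nat.card_eq_fintype_card, Fintype.card_subtype, mem_stabilizer_iff,
    mem_fixedBy, Finset.card_filter]
  exact Finset.sum_comm

theorem AddAction.card_orbits_subtype_mul_card (P : X → Prop) [DecidablePred P]
    (hP : ∀ (g : G) x, P x → P (g +ᵥ x)) :
    Nat.card (Quotient ((orbitRel G X).comap (Subtype.val : {x // P x} → X))) * Nat.card G =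
      ∑ x ∈ univ.filter P, Nat.card (stabilizer G x) := by
  let p : SubAddAction G X := ⟨{x | P x}, fun g x hx => hP g x hx⟩
  have hrel : orbitRel G p = (orbitRel G X).comap (Subtype.val : {x // P x} → X) :=
    SubAddAction.orbitRel_of_subAdd p
  have : DecidablePred (· ∈ p) := ‹DecidablePred P›
  rw [Finset.sum_subtype (univ.filter P) (p := P) (by simp), ← hrel]
  have := sum_card_stabilizer_eq_card_orbits_mul_card (G := G) (X := p)
  simp only [SubAddAction.stabilizer_of_subAdd] at this
  exact this.symm

end Burnside

instance instAddActionFunBool {G : Type*} [AddMonoid G] : AddAction G (G → Bool) where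
  vadd t w i := w (i + t)
  zero_vadd w := funext fun i => congrArg w (add_zero i)
  add_vadd s t w := funext fun i => congrArg w (add_assoc i s t).symm

@[simp]
theorem vadd_fun_bool_apply {G : Type*} [AddMonoid G] (t : G) (w : G → Bool) (i : G) :
    (t +ᵥ w) i = w (i + t) :=
  rfl

theorem mem_stabilizer_fun_bool_iff {G : Type*} [AddGroup G] {w : G → Bool} {t : G} :
    t ∈ stabilizer G w ↔ ∀ i, w (i + t) = w i := by
  rw [mem_stabilizer_iff, funext_iff]
  rfl

theorem rotSetoid_eq_orbitRel (n : ℕ) : rotSetoid n = orbitRel (ZMod n) (ZMod n → Bool) := by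
  ext u v
  rw [orbitRel_apply, mem_orbit_iff]
  exact exists_congr fun t => by rw [funext_iff]; exact forall_congr' fun i => eq_comm

theorem coPeriod_eq_card_stabilizer (n : ℕ) (w : ZMod n → Bool) :
    coPeriod n w = Nat.card (stabilizer (ZMod n) w) :=
  Nat.card_congr (Equiv.subtypeEquivRight fun _ => mem_stabilizer_fun_bool_iff.symm)

theorem coPeriod_vadd (n : ℕ) (t : ZMod n) (w : ZMod n → Bool) :
    coPeriod n (t +ᵥ w) = coPeriod n w := by
  simp only [coPeriod_eq_card_stabilizer]
  exact Nat.card_congr (stabilizerEquivStabilizerOfOrbitRel ⟨t, rfl⟩).toEquiv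

theorem onesCount_vadd (n : ℕ) (t : ZMod n) (w : ZMod n → Bool) :
    onesCount n (t +ᵥ w) = onesCount n w :=
  Nat.card_congr ((Equiv.addRight t).subtypeEquiv fun _ => Iff.rfl)

theorem coPeriod_dvd (n : ℕ) [NeZero n] (w : ZMod n → Bool) : coPeriod n w ∣ n := by
  rw [coPeriod_eq_card_stabilizer]
  exact (AddSubgroup.card_addSubgroup_dvd_card _).trans (Nat.card_zmod n).dvd

theorem NrCard_mul_eq_sum_coPeriod (n k r : ℕ) [NeZero n] :
    NrCard n k r * n = ∑ w ∈ univ.filter (fun w => onesCount n w = k ∧ coPeriod n w ∣ r),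
      coPeriod n w := by
  classical
  have h := card_orbits_subtype_mul_card (G := ZMod n)
    (fun w => onesCount n w = k ∧ coPeriod n w ∣ r) fun t w ⟨hk, hr⟩ =>
      ⟨(onesCount_vadd n t w).trans hk, (coPeriod_vadd n t w).symm ▸ hr⟩
  rw [Nat.card_zmod] at h
  simp only [NrCard, rotSetoid_eq_orbitRel, h, coPeriod_eq_card_stabilizer]

theorem AddSubgroup.mem_iff_natCard_nsmul_eq_zero {G : Type*} [AddCommGroup G] [Finite G]
    [IsAddCyclic G] (S : AddSubgroup G) {x : G} : x ∈ S ↔ Nat.card S • x = 0 := by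
  have hle : S ≤ (nsmulAddMonoidHom (Nat.card S)).ker := fun y hy =>
    addOrderOf_dvd_iff_nsmul_eq_zero.mp (S.addOrderOf_dvd_natCard hy)
  have hcard : Nat.card (nsmulAddMonoidHom (α := G) (Nat.card S)).ker = Nat.card S := by
    rw [IsAddCyclic.card_nsmulAddMonoidHom_ker, Nat.gcd_eq_right S.card_addSubgroup_dvd_card]
  exact (SetLike.ext_iff.mp (AddSubgroup.eq_of_le_of_card_ge hle hcard.le) x).trans
    AddMonoidHom.mem_ker

theorem ZMod.dvd_natCard_iff_natCast_div_mem {n d : ℕ} [NeZero n] (hd : d ∣ n)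
    (S : AddSubgroup (ZMod n)) : d ∣ Nat.card S ↔ ((n / d : ℕ) : ZMod n) ∈ S := by
  have hpos : 0 < n / d := Nat.div_pos (Nat.le_of_dvd (NeZero.pos n) hd)
    (Nat.pos_of_dvd_of_pos hd (NeZero.pos n))
  rw [S.mem_iff_natCard_nsmul_eq_zero, nsmul_eq_mul, ← Nat.cast_mul,
    ZMod.natCast_eq_zero_iff, ← Nat.mul_dvd_mul_iff_right hpos, Nat.mul_div_cancel' hd]

theorem dvd_coPeriod_iff {n d : ℕ} [NeZero n] (hd : d ∣ n) (w : ZMod n → Bool) :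
    d ∣ coPeriod n w ↔ AddSubgroup.zmultiples ((n / d : ℕ) : ZMod n) ≤ stabilizer (ZMod n) w := by
  rw [coPeriod_eq_card_stabilizer, ZMod.dvd_natCard_iff_natCast_div_mem hd,
    AddSubgroup.zmultiples_le]

theorem card_fun_bool_card_true_eq_choose (α : Type*) [Finite α] (c : ℕ) :
    Nat.card {v : α → Bool // Nat.card {a // v a = true} = c} = (Nat.card α).choose c := by
  classical
  have := Fintype.ofFinite α
  let e : (α → Bool) ≃ Finset α :=
    { toFun v := univ.filter (v · = true)
      invFun s a := decide (a ∈ s)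
      left_inv v := by ext; simp
      right_inv s := by ext; simp }
  rw [Nat.card_eq_fintype_card (α := α), ← Fintype.card_finset_len, ← Nat.card_eq_fintype_card]
  refine Nat.card_congr (e.subtypeEquiv fun v => ?_)
  rw [Nat.card_eq_fintype_card, Fintype.card_subtype]
  rfl

section Quotient

variable {G : Type*} [AddGroup G] (H : AddSubgroup G)

noncomputable def funQuotientEquivFixed :
    (G ⧸ H → Bool) ≃ {w : G → Bool // H ≤ stabilizer G w} where
  toFun v := ⟨v ∘ QuotientAddGroup.mk, fun h hh => mem_stabilizer_fun_bool_iff.mpr fun i => by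
    simp [QuotientAddGroup.mk_add_of_mem i hh]⟩
  invFun w q := w.1 q.out
  left_inv v := funext fun q => by simp
  right_inv w := Subtype.ext <| funext fun i => by
    obtain ⟨h, hh⟩ := QuotientAddGroup.mk_out_eq_add H i
    simpa [hh] using mem_stabilizer_fun_bool_iff.mp (w.2 h.2) i

theorem card_true_comp_mk (v : G ⧸ H → Bool) :
    Nat.card {i : G // v i = true} = Nat.card H * Nat.card {q // v q = true} := by
  rw [← Nat.card_prod]
  exact Nat.card_congr (QuotientAddGroup.preimageMkEquivAddSubgroupProdSet H {q | v q = true})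

theorem card_fixed_card_true_eq [Finite G] (k : ℕ) :
    Nat.card {w : G → Bool // H ≤ stabilizer G w ∧ Nat.card {i // w i = true} = k} =
      if Nat.card H ∣ k then H.index.choose (k / Nat.card H) else 0 := by
  have hfix : Nat.card {w : G → Bool // H ≤ stabilizer G w ∧ Nat.card {i // w i = true} = k} =
      Nat.card {v : G ⧸ H → Bool // Nat.card H * Nat.card {q // v q = true} = k} := by
    refine Nat.card_congr ((Equiv.subtypeSubtypeEquivSubtypeInter _ _).symm.trans
      ((funQuotientEquivFixed H).subtypeEquiv fun v => ?_).symm)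
    rw [← card_true_comp_mk]
    rfl
  have hH : 0 < Nat.card H := Nat.card_pos
  rw [hfix]
  split_ifs with hk
  · obtain ⟨c, rfl⟩ := hk
    rw [Nat.mul_div_cancel_left c hH, AddSubgroup.index, ← card_fun_bool_card_true_eq_choose]
    exact Nat.card_congr (Equiv.subtypeEquivRight fun v => Nat.mul_right_inj hH.ne')
  · rw [Nat.card_eq_zero]
    exact Or.inl ⟨fun ⟨v, hv⟩ => hk ⟨_, hv.symm⟩⟩

end Quotient

theorem card_onesCount_dvd_coPeriod {n d : ℕ} [NeZero n] (hd : d ∣ n) (k : ℕ) :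
    Nat.card {w : ZMod n → Bool // onesCount n w = k ∧ d ∣ coPeriod n w} =
      if d ∣ k then (n / d).choose (k / d) else 0 := by
  set H := AddSubgroup.zmultiples ((n / d : ℕ) : ZMod n)
  have hn : n ≠ 0 := NeZero.ne n
  have hH : Nat.card H = d := by
    rw [Nat.card_zmultiples, ZMod.addOrderOf_coe _ hn, Nat.gcd_eq_right (Nat.div_dvd_of_dvd hd),
      Nat.div_div_self hd hn]
  have hindex : H.index = n / d := by
    have hmul := H.card_mul_index
    rw [hH, Nat.card_zmod] at hmul
    exact (Nat.div_eq_of_eq_mul_right (hH ▸ Nat.card_pos) hmul.symm).symm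
  calc Nat.card {w : ZMod n → Bool // onesCount n w = k ∧ d ∣ coPeriod n w}
      = Nat.card {w : ZMod n → Bool // H ≤ stabilizer (ZMod n) w ∧
          Nat.card {i // w i = true} = k} :=
        Nat.card_congr (Equiv.subtypeEquivRight fun w => by rw [dvd_coPeriod_iff hd, and_comm]; rfl)
    _ = _ := by rw [card_fixed_card_true_eq, hH, hindex]

theorem Nr_count_general (n k r : ℕ) (hn : 1 ≤ n) :
    (NrCard n k r : ℤ) * n =
      ∑ d ∈ (Nat.gcd n k).divisors, ((n / d).choose (k / d) : ℤ) * ramanujanSum d r := by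
  classical
  have : NeZero n := ⟨by omega⟩
  have hcoPeriod (w : ZMod n → Bool) : (if coPeriod n w ∣ r then (coPeriod n w : ℤ) else 0) =
      ∑ d ∈ n.divisors, if d ∣ coPeriod n w then ramanujanSum d r else 0 := by
    rw [← Finset.sum_filter, Nat.divisors_filter_dvd_of_dvd (NeZero.ne n) (coPeriod_dvd n w),
      sum_divisors_ramanujanSum]
  have hgcd : (Nat.gcd n k).divisors = n.divisors.filter (· ∣ k) := by
    rw [← Nat.divisors_filter_dvd_of_dvd (NeZero.ne n) (Nat.gcd_dvd_left n k)]
    exact Finset.filter_congr fun d hd => by simp [Nat.dvd_gcd_iff, Nat.dvd_of_mem_divisors hd]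
  calc (NrCard n k r : ℤ) * n
      = ∑ w ∈ univ.filter (onesCount n · = k),
          if coPeriod n w ∣ r then (coPeriod n w : ℤ) else 0 := by
        rw [← Finset.sum_filter, Finset.filter_filter]
        exact_mod_cast NrCard_mul_eq_sum_coPeriod n k r
    _ = ∑ d ∈ n.divisors, ∑ w ∈ univ.filter (onesCount n · = k),
          if d ∣ coPeriod n w then ramanujanSum d r else 0 := by
        simp only [hcoPeriod]
        exact Finset.sum_comm
    _ = ∑ d ∈ n.divisors,
          (if d ∣ k then ((n / d).choose (k / d) : ℤ) else 0) * ramanujanSum d r := by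
        refine Finset.sum_congr rfl fun d hd => ?_
        rw [← Finset.sum_filter, Finset.filter_filter, Finset.sum_const,
          ← Fintype.card_subtype, ← Nat.card_eq_fintype_card,
          card_onesCount_dvd_coPeriod (Nat.dvd_of_mem_divisors hd), nsmul_eq_mul]
        push_cast
        rfl
    _ = _ := by rw [hgcd, Finset.sum_filter]; simp only [ite_mul, zero_mul]

/-- `|Nᵣ(n,k)| = (1/n) ∑_{d ∣ gcd(n,k)} C(n/d,k/d) c_d(r)`. -/
theorem Nr_count (n k r : ℕ) (hn : 1 ≤ n) (hk : k ≤ n) (hr : r < n) :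
    (NrCard n k r : ℤ) * n =
      ∑ d ∈ (Nat.gcd n k).divisors, ((n / d).choose (k / d) : ℤ) * ramanujanSum d r :=
  Nr_count_general n k r hn
end

section
/- If gcd(n,k,r) = 1, then for all 0 ≤ k ≤ n and 0 ≤ r < n, the number of k-element subsets of {1,…,n} summing to r mod n equals the number of k-element subsets of {1,…,n} summing to 1 mod n. -/
open Finset

/-!
Translating a `k`-subset of `ZMod n` by `c` adds `k * c` to its sum, and multiplying it by a unit
`u` multiplies its sum by `u`. Hence the number of `k`-subsets with sum `r` only depends on the
orbit of `r` under the maps `r ↦ u * r + k * c`, and when `gcd(n, k, r) = 1` this orbit contains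
`1`: `r` is a unit modulo `gcd(n, k)`, which lifts to a unit modulo `n`, and the multiples of
`k` in `ZMod n` are exactly the multiples of `gcd(n, k)`.
-/

section SubsetSumCount

variable (G : Type*) [AddCommMonoid G] [Fintype G] [DecidableEq G]

def subsetSumCount (k : ℕ) (r : G) : ℕ :=
  #{A : Finset G | #A = k ∧ ∑ a ∈ A, a = r}

variable {G} {k : ℕ}

theorem subsetSumCount_eq_of_equiv (e f : G ≃ G)
    (hsum : ∀ A : Finset G, #A = k → ∑ a ∈ A, e a = f (∑ a ∈ A, a)) (r : G) :
    subsetSumCount G k (f r) = subsetSumCount G k r := by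
  refine (card_equiv e.finsetCongr fun A => ?_).symm
  simp only [mem_filter_univ, Equiv.finsetCongr_apply, card_map, sum_map,
    Equiv.coe_toEmbedding]
  refine and_congr_right fun hA => ?_
  rw [hsum A hA, f.apply_eq_iff_eq]

theorem subsetSumCount_addEquiv (φ : G ≃+ G) (r : G) :
    subsetSumCount G k (φ r) = subsetSumCount G k r :=
  subsetSumCount_eq_of_equiv φ.toEquiv φ.toEquiv (fun A _ => (map_sum φ _ A).symm) r

theorem subsetSumCount_add_nsmul {G : Type*} [AddCommGroup G] [Fintype G] [DecidableEq G]
    (r c : G) : subsetSumCount G k (r + k • c) = subsetSumCount G k r :=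
  subsetSumCount_eq_of_equiv (Equiv.addRight c) (Equiv.addRight (k • c))
    (fun A hA => by simp [sum_add_distrib, hA]) r

theorem subsetSumCount_units_mul {R : Type*} [Semiring R] [Fintype R] [DecidableEq R]
    (u : Rˣ) (r : R) : subsetSumCount R k (u * r) = subsetSumCount R k r :=
  subsetSumCount_addEquiv (AddAut.mulLeft u) r

end SubsetSumCount

theorem Finset.card_filter_powerset_image {α β : Type*} [DecidableEq β] {s : Finset α}
    {f : α → β} (hf : Set.InjOn f s) (p : Finset β → Prop) [DecidablePred p] :
    #{A ∈ s.powerset | p (A.image f)} = #{B ∈ (s.image f).powerset | p B} := by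
  rw [powerset_image, filter_image, card_image_of_injOn]
  exact (image_injOn_powerset_of_injOn hf).mono (filter_subset _ _)

namespace ZMod

theorem image_natCast_Icc_one (n : ℕ) [NeZero n] :
    (Icc 1 n).image (Nat.cast : ℕ → ZMod n) = univ := by
  refine eq_univ_of_forall fun x => mem_image.mpr ⟨(x - 1).val + 1, ?_, ?_⟩
  · simpa [Nat.add_one_le_iff] using (x - 1).val_lt
  · simp

theorem natCast_injOn_Icc_one (n : ℕ) [NeZero n] :
    Set.InjOn (Nat.cast : ℕ → ZMod n) (Icc 1 n) := by
  rw [← card_image_iff, image_natCast_Icc_one, card_univ, ZMod.card, Nat.card_Icc,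
    Nat.add_sub_cancel]

theorem exists_eq_natCast_mul_of_castHom_gcd_eq_zero {n k : ℕ} {x : ZMod n}
    (hx : castHom (Nat.gcd_dvd_left n k) (ZMod (n.gcd k)) x = 0) : ∃ c : ZMod n, x = k * c := by
  rw [castHom_apply, ← intCast_cast, intCast_zmod_eq_zero_iff_dvd] at hx
  obtain ⟨m, hm⟩ := hx
  refine ⟨Nat.gcdB n k * m, ?_⟩
  rw [← intCast_zmod_cast x, hm, Nat.gcd_eq_gcd_ab]
  push_cast
  rw [natCast_self]
  ring

theorem exists_units_mul_add_natCast_mul_eq_one {n k r : ℕ} [NeZero n]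
    (h : Nat.gcd (Nat.gcd n k) r = 1) :
    ∃ (u : (ZMod n)ˣ) (c : ZMod n), (u : ZMod n) * r + k * c = 1 := by
  have hg := Nat.gcd_dvd_left n k
  have hr : r.Coprime (n.gcd k) := Nat.coprime_comm.mp h
  obtain ⟨u, hu⟩ := unitsMap_surjective hg (unitOfCoprime r hr)⁻¹
  have hur : castHom hg (ZMod (n.gcd k)) (u * r - 1) = 0 := by
    rw [map_sub, map_mul, map_natCast, map_one, castHom_apply, ← unitsMap_val hg, hu,
      ← coe_unitOfCoprime r hr, Units.inv_mul, sub_self]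
  obtain ⟨c, hc⟩ := exists_eq_natCast_mul_of_castHom_gcd_eq_zero hur
  exact ⟨u, -c, by linear_combination hc⟩

end ZMod

theorem SbarCard_eq_subsetSumCount {n r : ℕ} [NeZero n] (k : ℕ) (hr : r < n) :
    SbarCard n k r = subsetSumCount (ZMod n) k r := by
  have hinj := ZMod.natCast_injOn_Icc_one n
  rw [SbarCard, subsetSumCount, ← powerset_univ, ← ZMod.image_natCast_Icc_one n,
    ← Finset.card_filter_powerset_image hinj]
  congr 1
  refine filter_congr fun A hA => ?_
  have hAinj := hinj.mono (mem_powerset.mp hA)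
  rw [card_image_of_injOn hAinj, sum_image hAinj, ← Nat.cast_sum,
    ZMod.natCast_eq_natCast_iff', Nat.mod_eq_of_lt hr]

theorem Sbar_r_eq_Sbar_one_general (n k r : ℕ) (hr : r < n)
    (h : Nat.gcd (Nat.gcd n k) r = 1) :
    SbarCard n k r = SbarCard n k (1 % n) := by
  have : NeZero n := ⟨by omega⟩
  obtain ⟨u, c, huc⟩ := ZMod.exists_units_mul_add_natCast_mul_eq_one h
  rw [SbarCard_eq_subsetSumCount k hr, SbarCard_eq_subsetSumCount k (Nat.mod_lt 1 (by omega)),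
    ZMod.natCast_mod, Nat.cast_one, ← huc, ← nsmul_eq_mul, subsetSumCount_add_nsmul,
    subsetSumCount_units_mul]

/-- If `gcd(n,k,r) = 1` then `|S̄ᵣ(n,k)| = |S̄₁(n,k)|`. -/
theorem Sbar_r_eq_Sbar_one (n k r : ℕ) (hk : k ≤ n) (hr : r < n)
    (h : Nat.gcd (Nat.gcd n k) r = 1) :
    SbarCard n k r = SbarCard n k (1 % n) :=
  Sbar_r_eq_Sbar_one_general n k r hr h
end

section
/- If gcd(n,k,r) = 1 (with n ≥ 1), then there exist integers x, y, z with n·x + k·y + r·z = 1 and gcd(z,n) = 1. -/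
/-!
Let `d = gcd(n, k)`. Since `gcd(d, r) = 1`, `r` has an inverse `b` modulo `d`. Units lift along
`ℤ/n → ℤ/d` (as `d ∣ n`), so some `z` coprime to `n` satisfies `z ≡ b (mod d)`.
Then `d ∣ 1 - rz`, and Bézout for `n, k` writes `1 - rz` as `nx + ky`.
-/

theorem Int.exists_isCoprime_modEq_of_dvd {d n : ℕ} [NeZero n] (hdn : d ∣ n) {b : ℤ}
    (hb : IsCoprime b d) : ∃ z : ℤ, IsCoprime z n ∧ z ≡ b [ZMOD d] := by
  have hb_unit : IsUnit (b : ZMod d) := .of_mul_eq_one _ (ZMod.coe_int_mul_inv_eq_one hb)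
  obtain ⟨w, hw⟩ := ZMod.unitsMap_surjective hdn hb_unit.unit
  refine ⟨(w : ZMod n).val, Nat.isCoprime_iff_coprime.mpr (ZMod.val_coe_unit_coprime w), ?_⟩
  rw [← ZMod.intCast_eq_intCast_iff, Int.cast_natCast, ZMod.natCast_val, ← ZMod.unitsMap_val hdn,
    hw, IsUnit.unit_spec]

/-- If `gcd(n,k,r) = 1` with `n ≥ 1`, then there are integers `x, y, z` with
`nx + ky + rz = 1` and `gcd(z,n) = 1`. -/
theorem bezout_with_coprime_coeff (n k r : ℤ) (hn : 1 ≤ n)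
    (h : Int.gcd (Int.gcd n k) r = 1) :
    ∃ x y z : ℤ, n * x + k * y + r * z = 1 ∧ Int.gcd z n = 1 := by
  have : NeZero n.natAbs := ⟨by omega⟩
  obtain ⟨a, b, hab⟩ : IsCoprime (Int.gcd n k : ℤ) r := Int.isCoprime_iff_gcd_eq_one.mpr h
  obtain ⟨z, hz_coprime, hzb⟩ :=
    Int.exists_isCoprime_modEq_of_dvd (Int.gcd_dvd_natAbs_left n k) (b := b) ⟨r, a, by linarith⟩
  have hrz : r * z ≡ 1 [ZMOD Int.gcd n k] :=
    calc r * z ≡ r * b [ZMOD Int.gcd n k] := hzb.mul_left r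
      _ = 1 - a * Int.gcd n k := by linarith
      _ ≡ 1 [ZMOD Int.gcd n k] := Int.modEq_iff_dvd.mpr ⟨a, by ring⟩
  obtain ⟨q, hq⟩ := Int.modEq_iff_dvd.mp hrz
  refine ⟨n.gcdA k * q, n.gcdB k * q, z, ?_, ?_⟩
  · linear_combination -q * Int.gcd_eq_gcd_ab n k - hq
  · simpa [Int.isCoprime_iff_gcd_eq_one, Int.gcd_def, Int.natAbs_abs] using hz_coprime
end

section
/- Let n ≥ 1, and suppose y and z are integers with gcd(z,n)=1 and n·x + k·y + r·z = 1 for some integer x. Then the map sending a subset A of ℤ/nℤ to {z·a + y : a ∈ A} is a bijection from the k-element subsets of ℤ/nℤ whose elements sum to r to the k-element subsets of ℤ/nℤ whose elements sum to 1. -/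
/-! Since `z` is a unit mod `n`, `a ↦ z a + y` is a permutation of `ℤ/nℤ`. Its action on subsets
preserves cardinality and sends a `k`-subset with sum `s` to one with sum `z s + k y`; reducing
`n x + k y + r z = 1` mod `n` shows this is `1` exactly when `s = r`. -/

open Finset

section AffineImage

variable {R : Type*} [Ring R]

theorem Units.mul_add_injective (u : Rˣ) (y : R) : Function.Injective fun a => (u : R) * a + y :=
  fun _ _ hab => (u.mul_right_inj).1 (add_right_cancel hab)

variable [DecidableEq R]

theorem Finset.sum_image_mul_add (u : Rˣ) (y : R) (A : Finset R) :
    ∑ b ∈ A.image (fun a => (u : R) * a + y), b = u * ∑ a ∈ A, a + A.card * y := by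
  rw [sum_image fun a _ b _ hab => u.mul_add_injective y hab, sum_add_distrib,
    ← mul_sum, sum_const, nsmul_eq_mul]

theorem bijOn_image_mul_add (u : Rˣ) (y : R) (k : ℕ) (s : R) :
    Set.BijOn (fun A : Finset R => A.image (fun a => (u : R) * a + y))
      {A : Finset R | A.card = k ∧ ∑ a ∈ A, a = s}
      {A : Finset R | A.card = k ∧ ∑ a ∈ A, a = u * s + k * y} := by
  set e : R ≃ R := (Units.mulLeft u).trans (Equiv.addRight y)
  have he : (fun A : Finset R => A.image fun a => (u : R) * a + y) = e.finsetCongr := by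
    funext A
    rw [Equiv.finsetCongr_apply, map_eq_image]
    rfl
  rw [he]
  refine Equiv.bijOn _ fun A => ?_
  rw [← he]
  simp only [Set.mem_ofPred_eq, card_image_of_injective _ (u.mul_add_injective y), sum_image_mul_add]
  refine and_congr_right fun hA => ?_
  rw [hA, add_left_inj, Units.mul_right_inj]

end AffineImage

theorem affine_map_bijOn_general (n k : ℕ) (x y z r : ℤ)
    (hz : Int.gcd z n = 1) (h : n * x + k * y + r * z = 1) :
    Set.BijOn (fun A : Finset (ZMod n) => A.image (fun a => (z : ZMod n) * a + (y : ZMod n)))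
      {A : Finset (ZMod n) | A.card = k ∧ ∑ a ∈ A, a = (r : ZMod n)}
      {A : Finset (ZMod n) | A.card = k ∧ ∑ a ∈ A, a = 1} := by
  obtain ⟨u, hu⟩ : IsUnit (z : ZMod n) := (ZMod.coe_int_isUnit_iff_isCoprime z n).2
    (Int.isCoprime_iff_gcd_eq_one.2 (by rwa [Int.gcd_comm]))
  have hsum : (z : ZMod n) * r + k * y = 1 := by
    have := congrArg (Int.cast : ℤ → ZMod n) h
    push_cast [ZMod.natCast_self] at this
    linear_combination this
  rw [← hu] at hsum ⊢
  simpa only [hsum] using bijOn_image_mul_add u (y : ZMod n) k (r : ZMod n)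

/-- If `gcd(z,n)=1` and `nx + ky + rz = 1`, then `A ↦ zA + y` is a bijection from
the `k`-element subsets of `ℤ/nℤ` summing to `r` to those summing to `1`. -/
theorem affine_map_bijOn (n k : ℕ) (hn : 0 < n) (x y z r : ℤ)
    (hz : Int.gcd z n = 1) (h : n * x + k * y + r * z = 1) :
    Set.BijOn (fun A : Finset (ZMod n) => A.image (fun a => (z : ZMod n) * a + (y : ZMod n)))
      {A : Finset (ZMod n) | A.card = k ∧ ∑ a ∈ A, a = (r : ZMod n)}
      {A : Finset (ZMod n) | A.card = k ∧ ∑ a ∈ A, a = 1} :=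
  affine_map_bijOn_general n k x y z r hz h
end
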